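/- Let X be a closed linear subspace of a complex Banach space Y and let λ, β ≥ 1. Assume: (a) there exists a bounded linear operator Q : X** → X with ‖Q‖ ≤ β and Q(ι_X x) = x for all x ∈ X; (b) for every finite-dimensional subspace F of X and every finite-dimensional subspace G of Y with F ⊆ G, there exists a linear map T : G → X with ‖T‖ ≤ λ and Tf = f for all f ∈ F. Then there exists a bounded linear projection P : Y → Y with range X, Px = x for all x ∈ X, and ‖P‖ ≤ λβ. -/

import Mathlib

open NormedSpace

namespace NormedSpace

/-- The topological dual `E →L[𝕜] 𝕜`, as `NormedSpace.Dual` was defined in the older Mathlib. -/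
def Dual (𝕜 : Type*) [NontriviallyNormedField 𝕜] (E : Type*) [SeminormedAddCommGroup E]
    [NormedSpace 𝕜 E] : Type _ :=
  E →L[𝕜] 𝕜

noncomputable instance Dual.instSeminormedAddCommGroup (𝕜 : Type*) [NontriviallyNormedField 𝕜]
    (E : Type*) [SeminormedAddCommGroup E] [NormedSpace 𝕜 E] :
    SeminormedAddCommGroup (Dual 𝕜 E) :=
  ContinuousLinearMap.toSeminormedAddCommGroup

noncomputable instance Dual.instNormedSpace (𝕜 : Type*) [NontriviallyNormedField 𝕜]
    (E : Type*) [SeminormedAddCommGroup E] [NormedSpace 𝕜 E] :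
    NormedSpace 𝕜 (Dual 𝕜 E) :=
  ContinuousLinearMap.toNormedSpace

end NormedSpace

/-!
For each finite set `s ⊆ Y`, hypothesis (b) gives `T_s : span s → X` of norm `≤ λ` fixing
`span s ∩ X`; extend it by zero to `Y`. Along an ultrafilter refining the finite subsets of `Y`,
every `φ (T_s y)` stays in a compact disc, so `T_s` has a weak* limit `S : Y → X**`. Each point
lies in `span s` eventually, hence `S` is linear, `‖S‖ ≤ λ` and `S = ι_X` on `X`; then
`P = Q ∘ S` is the required projection.
-/

open Filter Topology

noncomputable instance NormedSpace.Dual.instFunLike (𝕜 : Type*) [NontriviallyNormedField 𝕜]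
    (E : Type*) [SeminormedAddCommGroup E] [NormedSpace 𝕜 E] : FunLike (Dual 𝕜 E) E 𝕜 :=
  ContinuousLinearMap.funLike

instance NormedSpace.Dual.instContinuousLinearMapClass (𝕜 : Type*) [NontriviallyNormedField 𝕜]
    (E : Type*) [SeminormedAddCommGroup E] [NormedSpace 𝕜 E] :
    ContinuousLinearMapClass (Dual 𝕜 E) 𝕜 E 𝕜 :=
  ContinuousLinearMap.continuousSemilinearMapClass

section ExtendByZero

variable {𝕜 : Type*} [NontriviallyNormedField 𝕜] {Y : Type*} [SeminormedAddCommGroup Y]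
  [NormedSpace 𝕜 Y] {E : Type*} [SeminormedAddCommGroup E] [NormedSpace 𝕜 E]
  {G : Submodule 𝕜 Y}

open Classical in
noncomputable def ContinuousLinearMap.extendByZero (T : G →L[𝕜] E) (y : Y) : E :=
  if h : y ∈ G then T ⟨y, h⟩ else 0

namespace ContinuousLinearMap

variable (T : G →L[𝕜] E)

theorem extendByZero_of_mem {y : Y} (hy : y ∈ G) : T.extendByZero y = T ⟨y, hy⟩ :=
  dif_pos hy

theorem norm_extendByZero_le (y : Y) : ‖T.extendByZero y‖ ≤ ‖T‖ * ‖y‖ := by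
  by_cases hy : y ∈ G
  · rw [T.extendByZero_of_mem hy]
    exact T.le_opNorm ⟨y, hy⟩
  · rw [extendByZero, dif_neg hy, norm_zero]
    positivity

theorem extendByZero_add {y z : Y} (hy : y ∈ G) (hz : z ∈ G) :
    T.extendByZero (y + z) = T.extendByZero y + T.extendByZero z := by
  rw [T.extendByZero_of_mem hy, T.extendByZero_of_mem hz, T.extendByZero_of_mem (G.add_mem hy hz),
    ← map_add]
  rfl

theorem extendByZero_smul (a : 𝕜) {y : Y} (hy : y ∈ G) :
    T.extendByZero (a • y) = a • T.extendByZero y := by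
  rw [T.extendByZero_of_mem hy, T.extendByZero_of_mem (G.smul_mem a hy), ← map_smul]
  rfl

end ContinuousLinearMap

end ExtendByZero

section WeakStarUltralimit

variable {𝕜 : Type*} [NontriviallyNormedField 𝕜] [ProperSpace 𝕜]
  {E : Type*} [SeminormedAddCommGroup E] [NormedSpace 𝕜 E] {ι : Type*} (U : Ultrafilter ι)

theorem exists_tendsto_apply_of_norm_le {g : ι → E} {C : ℝ} (hg : ∀ i, ‖g i‖ ≤ C)
    (φ : Dual 𝕜 E) : ∃ c, Tendsto (fun i => φ (g i)) U (𝓝 c) := by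
  have hmaps : ∀ i, φ (g i) ∈ Metric.closedBall (0 : 𝕜) (‖φ‖ * C) := fun i =>
    mem_closedBall_zero_iff.2 (ContinuousLinearMap.le_opNorm_of_le φ (hg i))
  obtain ⟨c, -, hc⟩ := (isCompact_closedBall (0 : 𝕜) (‖φ‖ * C)).ultrafilter_le_nhds
    (U.map fun i => φ (g i)) (le_principal_iff.2 (mem_map.2 (univ_mem' hmaps)))
  exact ⟨c, hc⟩

theorem exists_bidual_tendsto_of_norm_le {g : ι → E} {C : ℝ} (hg : ∀ i, ‖g i‖ ≤ C) :
    ∃ Φ : Dual 𝕜 (Dual 𝕜 E), ‖Φ‖ ≤ C ∧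
      ∀ φ, Tendsto (fun i => φ (g i)) U (𝓝 (Φ φ)) := by
  choose c hc using exists_tendsto_apply_of_norm_le (𝕜 := 𝕜) U hg
  obtain ⟨i₀⟩ := (U : Filter ι).nonempty_of_neBot
  let Φ : Dual 𝕜 E →ₗ[𝕜] 𝕜 :=
    { toFun := c
      map_add' := fun φ ψ => tendsto_nhds_unique (hc (φ + ψ)) ((hc φ).add (hc ψ))
      map_smul' := fun a φ => tendsto_nhds_unique (hc (a • φ)) ((hc φ).const_smul a) }
  have hΦ : ∀ φ, ‖Φ φ‖ ≤ C * ‖φ‖ := fun φ =>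
    le_of_tendsto (hc φ).norm (Eventually.of_forall fun i =>
      (ContinuousLinearMap.le_opNorm_of_le φ (hg i)).trans_eq (mul_comm _ _))
  exact ⟨Φ.mkContinuous C hΦ,
    LinearMap.mkContinuous_norm_le _ ((norm_nonneg _).trans (hg i₀)) hΦ, hc⟩

variable {Y : Type*} [SeminormedAddCommGroup Y] [NormedSpace 𝕜 Y]

theorem exists_bidual_tendsto_of_eventually_linear {g : ι → Y → E} {C : ℝ} (hC : 0 ≤ C)
    (hg : ∀ i y, ‖g i y‖ ≤ C * ‖y‖)
    (hadd : ∀ y z, ∀ᶠ i in U, g i (y + z) = g i y + g i z)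
    (hsmul : ∀ (a : 𝕜) y, ∀ᶠ i in U, g i (a • y) = a • g i y) :
    ∃ S : Y →L[𝕜] Dual 𝕜 (Dual 𝕜 E), ‖S‖ ≤ C ∧
      ∀ y φ, Tendsto (fun i => φ (g i y)) U (𝓝 (S y φ)) := by
  choose Φ hΦ hlim using fun y => exists_bidual_tendsto_of_norm_le (𝕜 := 𝕜) U (hg · y)
  let S : Y →ₗ[𝕜] Dual 𝕜 (Dual 𝕜 E) :=
    { toFun := Φ
      map_add' := fun y z => ContinuousLinearMap.ext fun φ =>
        tendsto_nhds_unique (hlim (y + z) φ) <| ((hlim y φ).add (hlim z φ)).congr' <| by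
          filter_upwards [hadd y z] with i hi
          rw [hi, map_add]
      map_smul' := fun a y => ContinuousLinearMap.ext fun φ =>
        tendsto_nhds_unique (hlim (a • y) φ) <| ((hlim y φ).const_smul a).congr' <| by
          filter_upwards [hsmul a y] with i hi
          rw [hi, map_smul] }
  exact ⟨S.mkContinuous C hΦ, LinearMap.mkContinuous_norm_le _ hC hΦ, hlim⟩

end WeakStarUltralimit

section LocalToGlobal

variable {𝕜 : Type*} [NontriviallyNormedField 𝕜]
  {Y : Type*} [SeminormedAddCommGroup Y] [NormedSpace 𝕜 Y]

theorem eventually_mem_span_finset (y : Y) :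
    ∀ᶠ s : Finset Y in (Ultrafilter.of atTop : Ultrafilter (Finset Y)),
      y ∈ Submodule.span 𝕜 (s : Set Y) :=
  ((eventually_ge_atTop {y}).filter_mono (Ultrafilter.of_le _)).mono fun _ hs =>
    Submodule.subset_span (hs (Finset.mem_singleton_self y))

theorem exists_bidual_extension_of_local_extension [ProperSpace 𝕜] (X : Submodule 𝕜 Y)
    {lam : ℝ} (hlam : 0 ≤ lam)
    (hext : ∀ F G : Submodule 𝕜 Y, FiniteDimensional 𝕜 F → FiniteDimensional 𝕜 G →
      F ≤ X → F ≤ G →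
      ∃ T : G →L[𝕜] X, ‖T‖ ≤ lam ∧ ∀ f (_ : f ∈ F) (hfG : f ∈ G), (T ⟨f, hfG⟩ : Y) = f) :
    ∃ S : Y →L[𝕜] Dual 𝕜 (Dual 𝕜 X), ‖S‖ ≤ lam ∧
      ∀ x : X, S x = inclusionInDoubleDual 𝕜 X x := by
  choose T hTn hTfix using fun s : Finset Y =>
    hext (Submodule.span 𝕜 s ⊓ X) (Submodule.span 𝕜 s)
      (Submodule.finiteDimensional_of_le inf_le_left) inferInstance inf_le_right inf_le_left
  have hmem := eventually_mem_span_finset (𝕜 := 𝕜) (Y := Y)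
  obtain ⟨S, hSn, hS⟩ := exists_bidual_tendsto_of_eventually_linear (Ultrafilter.of atTop) hlam
    (g := fun s => (T s).extendByZero)
    (fun s y => ((T s).norm_extendByZero_le y).trans (by gcongr; exact hTn s))
    (fun y z => by
      filter_upwards [hmem y, hmem z] with s hy hz
      exact (T s).extendByZero_add hy hz)
    (fun a y => by
      filter_upwards [hmem y] with s hy
      exact (T s).extendByZero_smul a hy)
  refine ⟨S, hSn, fun x => ContinuousLinearMap.ext fun φ => tendsto_nhds_unique (hS x φ) ?_⟩
  refine tendsto_const_nhds.congr' ?_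
  filter_upwards [hmem x] with s hx
  rw [(T s).extendByZero_of_mem hx, Subtype.ext (hTfix s x ⟨hx, x.2⟩ hx)]
  rfl

end LocalToGlobal

theorem stmt18_general {Y : Type*} [NormedAddCommGroup Y] [NormedSpace ℂ Y]
    (X : Subspace ℂ Y)
    (lam β : ℝ) (hlam : 1 ≤ lam) (hβ : 1 ≤ β)
    (Q : Dual ℂ (Dual ℂ X) →L[ℂ] X) (hQn : ‖Q‖ ≤ β)
    (hQ : ∀ x : X, Q (inclusionInDoubleDual ℂ X x) = x)
    (hext : ∀ F G : Subspace ℂ Y, FiniteDimensional ℂ F → FiniteDimensional ℂ G →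
      F ≤ X → F ≤ G →
      ∃ T : G →L[ℂ] X, ‖T‖ ≤ lam ∧
        ∀ (f : Y) (hfF : f ∈ F) (hfG : f ∈ G), ((T ⟨f, hfG⟩ : X) : Y) = f) :
    ∃ P : Y →L[ℂ] Y, (∀ y : Y, P y ∈ X) ∧ (∀ x ∈ X, P x = x) ∧ ‖P‖ ≤ lam * β := by
  obtain ⟨S, hSn, hS⟩ :=
    exists_bidual_extension_of_local_extension X (zero_le_one.trans hlam) hext
  refine ⟨X.subtypeL.comp (Q.comp S), fun y => (Q (S y)).2, fun x hx => ?_, ?_⟩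
  · exact congrArg Subtype.val ((congrArg Q (hS ⟨x, hx⟩)).trans (hQ ⟨x, hx⟩))
  · calc ‖X.subtypeL.comp (Q.comp S)‖ ≤ ‖X.subtypeL‖ * (‖Q‖ * ‖S‖) :=
          (X.subtypeL.opNorm_comp_le _).trans (by gcongr; exact Q.opNorm_comp_le S)
      _ ≤ 1 * (β * lam) := mul_le_mul X.norm_subtypeL_le
          (mul_le_mul hQn hSn (norm_nonneg S) (zero_le_one.trans hβ)) (by positivity) zero_le_one
      _ = lam * β := by ring

/-- Let `X` be a closed subspace of a complex Banach space `Y`, `λ, β ≥ 1`.  Assume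
(a) there is `Q : X** → X` with `‖Q‖ ≤ β` and `Q ∘ ι_X = id`, and (b) for all
finite-dimensional subspaces `F ⊆ X` and `G ⊆ Y` with `F ⊆ G` there is a linear map
`T : G → X` with `‖T‖ ≤ λ` fixing `F` pointwise.  Then there is a bounded linear
projection `P : Y → Y` with range `X` and `‖P‖ ≤ λβ`. -/
theorem stmt18 {Y : Type*} [NormedAddCommGroup Y] [NormedSpace ℂ Y] [CompleteSpace Y]
    (X : Subspace ℂ Y) (hX : IsClosed (X : Set Y))
    (lam β : ℝ) (hlam : 1 ≤ lam) (hβ : 1 ≤ β)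
    (Q : Dual ℂ (Dual ℂ X) →L[ℂ] X) (hQn : ‖Q‖ ≤ β)
    (hQ : ∀ x : X, Q (inclusionInDoubleDual ℂ X x) = x)
    (hext : ∀ F G : Subspace ℂ Y, FiniteDimensional ℂ F → FiniteDimensional ℂ G →
      F ≤ X → F ≤ G →
      ∃ T : G →L[ℂ] X, ‖T‖ ≤ lam ∧
        ∀ (f : Y) (hfF : f ∈ F) (hfG : f ∈ G), ((T ⟨f, hfG⟩ : X) : Y) = f) :
    ∃ P : Y →L[ℂ] Y, (∀ y : Y, P y ∈ X) ∧ (∀ x ∈ X, P x = x) ∧ ‖P‖ ≤ lam * β :=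
  stmt18_general X lam β hlam hβ Q hQn hQ hext
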